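/- arXiv:2407.21642 — 3 statements merged into one kernel-verified Lean document; each statement's English description precedes it below -/
import Mathlib

section
/- Let u, v : [0,T] → H be differentiable curves in a real inner product space H with u(0) = v(0), satisfying u'(t) = G(t, u(t)) and v'(t) = G(t, v(t)) + w(t), where G : ℝ × H → H and w : [0,T] → H is continuous. Assume there is a continuous λ : [0,T] → ℝ such that ⟨G(t,x) - G(t,y), x - y⟩ ≤ λ(t)·‖x - y‖² for all x, y ∈ H and t ∈ [0,T]. Then ‖u(T) - v(T)‖ ≤ ∫₀ᵀ exp(∫ₜᵀ λ(s) ds)·‖w(t)‖ dt. -/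
/-!
The error `e = u - v` satisfies `⟪e, e'⟫ ≤ λ ‖e‖² + ‖w‖ ‖e‖` by the one-sided Lipschitz bound and
Cauchy–Schwarz. With `Λ t = ∫₀ᵗ λ`, the rescaled error `f = exp (-Λ) • e` then satisfies
`⟪f, f'⟫ ≤ exp (-Λ) ‖w‖ ‖f‖`, so `‖f‖` grows at rate at most `exp (-Λ) ‖w‖`; multiplying back
by `exp (Λ T)` gives the bound.
-/

open MeasureTheory intervalIntegral Set

theorem hasDerivAt_integral_of_continuousOn_Icc {l : ℝ → ℝ} {a b t : ℝ}
    (hl : ContinuousOn l (Icc a b)) (ht : t ∈ Ioo a b) :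
    HasDerivAt (fun x => ∫ s in a..x, l s) (l t) t :=
  integral_hasDerivAt_right
    (hl.mono (by rw [uIcc_of_le ht.1.le]; exact Icc_subset_Icc_right ht.2.le)).intervalIntegrable
    (hl.mono Ioo_subset_Icc_self |>.stronglyMeasurableAtFilter isOpen_Ioo t ht)
    (hl.continuousAt (Icc_mem_nhds ht.1 ht.2))

section InnerProductSpace

variable {E : Type*} [NormedAddCommGroup E] [InnerProductSpace ℝ E]

theorem norm_le_add_integral_of_inner_deriv_le {f f' : ℝ → E} {g : ℝ → ℝ} {a b : ℝ}
    (hab : a ≤ b) (hf : ContinuousOn f (Icc a b)) (hf' : ∀ t ∈ Ioo a b, HasDerivAt f (f' t) t)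
    (hg : IntegrableOn g (Icc a b)) (hg₀ : ∀ t ∈ Ioo a b, 0 ≤ g t)
    (hfg : ∀ t ∈ Ioo a b, inner ℝ (f t) (f' t) ≤ g t * ‖f t‖) :
    ‖f b‖ ≤ ‖f a‖ + ∫ t in a..b, g t := by
  refine le_of_forall_pos_le_add fun ε hε => ?_
  -- `√(‖f‖² + ε²)` is differentiable even where `f` vanishes, unlike `‖f‖`.
  have hpos : ∀ t, 0 < ‖f t‖ ^ 2 + ε ^ 2 := fun t => by positivity
  have hχ : √(‖f b‖ ^ 2 + ε ^ 2) - √(‖f a‖ ^ 2 + ε ^ 2) ≤ ∫ t in a..b, g t := by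
    refine sub_le_integral_of_hasDeriv_right_of_le (g := fun t => √(‖f t‖ ^ 2 + ε ^ 2)) hab
      ((hf.norm.pow 2).add continuousOn_const).sqrt
      (fun t ht => (((hf' t ht).norm_sq.add_const _).sqrt (hpos t).ne').hasDerivWithinAt) hg
      fun t ht => ?_
    rw [div_le_iff₀ (by positivity)]
    have hnorm : ‖f t‖ ≤ √(‖f t‖ ^ 2 + ε ^ 2) := Real.le_sqrt_of_sq_le (by linarith [sq_nonneg ε])
    have hfgt := hfg t ht
    have hgt := hg₀ t ht
    nlinarith
  have hb : ‖f b‖ ≤ √(‖f b‖ ^ 2 + ε ^ 2) := Real.le_sqrt_of_sq_le (by linarith [sq_nonneg ε])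
  have ha : √(‖f a‖ ^ 2 + ε ^ 2) ≤ ‖f a‖ + ε :=
    (Real.sqrt_le_left (by positivity)).2 (by nlinarith [norm_nonneg (f a)])
  linarith

theorem norm_le_exp_integral_of_inner_deriv_le {f f' : ℝ → E} {l h : ℝ → ℝ} {a b : ℝ}
    (hab : a ≤ b) (hf : ContinuousOn f (Icc a b)) (hf' : ∀ t ∈ Ioo a b, HasDerivAt f (f' t) t)
    (hl : ContinuousOn l (Icc a b)) (hh : IntegrableOn h (Icc a b)) (hh₀ : ∀ t ∈ Ioo a b, 0 ≤ h t)
    (hfh : ∀ t ∈ Ioo a b, inner ℝ (f t) (f' t) ≤ l t * ‖f t‖ ^ 2 + h t * ‖f t‖) :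
    ‖f b‖ ≤ Real.exp (∫ s in a..b, l s) * ‖f a‖ +
      ∫ t in a..b, Real.exp (∫ s in t..b, l s) * h t := by
  set Λ : ℝ → ℝ := fun t => ∫ s in a..t, l s
  have hl' : ContinuousOn l (uIcc a b) := by rwa [uIcc_of_le hab]
  have hΛ : ContinuousOn Λ (Icc a b) := by
    simpa only [uIcc_of_le hab] using
      continuousOn_primitive_interval (hl'.integrableOn_compact isCompact_uIcc)
  have hc : ContinuousOn (fun t => Real.exp (-Λ t)) (Icc a b) := hΛ.neg.rexp
  -- The integrating factor `exp (-Λ)` cancels the `l ‖f‖²` term.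
  have key := norm_le_add_integral_of_inner_deriv_le (f := fun t => Real.exp (-Λ t) • f t)
    (f' := fun t => Real.exp (-Λ t) • (f' t - l t • f t)) (g := fun t => Real.exp (-Λ t) * h t)
    hab (hc.smul hf) (fun t ht => ?deriv) (hh.continuousOn_mul hc isCompact_Icc)
    (fun t ht => mul_nonneg (Real.exp_pos _).le (hh₀ t ht)) (fun t ht => ?inner)
  case deriv =>
    have hd : HasDerivAt (fun t => Real.exp (-Λ t)) (Real.exp (-Λ t) * -l t) t :=
      (hasDerivAt_integral_of_continuousOn_Icc hl ht).neg.exp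
    exact (hd.smul (hf' t ht)).congr_deriv (by module)
  case inner =>
    have hft := hfh t ht
    have hexp := Real.exp_pos (-Λ t)
    simp only [real_inner_smul_left, real_inner_smul_right, inner_sub_right,
      real_inner_self_eq_norm_sq, norm_smul, Real.norm_of_nonneg hexp.le]
    nlinarith [mul_pos hexp hexp]
  have hΛa : Λ a = 0 := integral_same
  have hint : ∫ t in a..b, Real.exp (∫ s in t..b, l s) * h t
      = Real.exp (Λ b) * ∫ t in a..b, Real.exp (-Λ t) * h t := by
    rw [← intervalIntegral.integral_const_mul]
    refine integral_congr fun t ht => ?_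
    have : ∫ s in t..b, l s = Λ b + -Λ t := by
      rw [← sub_eq_add_neg]
      exact (integral_interval_sub_left hl'.intervalIntegrable
        (hl'.mono (uIcc_subset_uIcc left_mem_uIcc ht)).intervalIntegrable).symm
    simp only [this, Real.exp_add, mul_assoc]
  rw [hΛa, neg_zero, Real.exp_zero, one_smul, norm_smul,
    Real.norm_of_nonneg (Real.exp_pos _).le] at key
  calc ‖f b‖ = Real.exp (Λ b) * (Real.exp (-Λ b) * ‖f b‖) := by
        rw [← mul_assoc, ← Real.exp_add, add_neg_cancel, Real.exp_zero, one_mul]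
    _ ≤ Real.exp (Λ b) * (‖f a‖ + ∫ t in a..b, Real.exp (-Λ t) * h t) := by gcongr
    _ = _ := by rw [hint, mul_add]

end InnerProductSpace

theorem pinn_error_bound_inner_product
    {H : Type*} [NormedAddCommGroup H] [InnerProductSpace ℝ H]
    (T : ℝ) (hT : 0 < T)
    (u v : ℝ → H) (G : ℝ → H → H) (w : ℝ → H) (l : ℝ → ℝ)
    (hw_cont : Continuous w) (hl_cont : Continuous l)
    (h0 : u 0 = v 0)
    (hu : ∀ t ∈ Set.Icc (0:ℝ) T, HasDerivAt u (G t (u t)) t)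
    (hv : ∀ t ∈ Set.Icc (0:ℝ) T, HasDerivAt v (G t (v t) + w t) t)
    (hG : ∀ t ∈ Set.Icc (0:ℝ) T, ∀ x y : H,
      (inner ℝ (G t x - G t y) (x - y) : ℝ) ≤ l t * ‖x - y‖ ^ 2) :
    ‖u T - v T‖ ≤ ∫ t in (0:ℝ)..T, Real.exp (∫ s in t..T, l s) * ‖w t‖ := by
  have he : ∀ t ∈ Icc 0 T,
      HasDerivAt (fun t => u t - v t) (G t (u t) - G t (v t) - w t) t := fun t ht =>
    ((hu t ht).sub (hv t ht)).congr_deriv (sub_add_eq_sub_sub _ _ _)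
  have hbound : ∀ t ∈ Ioo 0 T, inner ℝ (u t - v t) (G t (u t) - G t (v t) - w t)
      ≤ l t * ‖u t - v t‖ ^ 2 + ‖w t‖ * ‖u t - v t‖ := fun t ht => by
    rw [inner_sub_right, real_inner_comm]
    have hcs := neg_le_of_abs_le (abs_real_inner_le_norm (u t - v t) (w t))
    linarith [hG t (Ioo_subset_Icc_self ht) (u t) (v t)]
  have key := norm_le_exp_integral_of_inner_deriv_le hT.le
    (fun t ht => (he t ht).continuousAt.continuousWithinAt)
    (fun t ht => he t (Ioo_subset_Icc_self ht)) hl_cont.continuousOn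
    hw_cont.norm.integrableOn_Icc (fun t _ => norm_nonneg (w t)) hbound
  simpa only [h0, sub_self, norm_zero, mul_zero, zero_add] using key
end

section
/- Let Λ : [0,T] → ℝ be continuous and strictly positive and C_p > 0. Then the minimax value min over densities ρ (continuous, ρ > 0, ∫₀ᵀ ρ = 1) of max over h ≥ 0 with ∫₀ᵀ ρ h² ≤ C_p of ∫₀ᵀ Λ h dt equals √(C_p) · ∫₀ᵀ Λ(t) dt, and the minimum is attained at ρ(t) = Λ(t)/∫₀ᵀ Λ(s) ds. -/
open MeasureTheory intervalIntegral

theorem minimax_optimal_weighting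
    (T : ℝ) (hT : 0 < T) (Cp : ℝ) (hCp : 0 < Cp)
    (Λ : ℝ → ℝ) (hΛ_cont : Continuous Λ)
    (hΛ_pos : ∀ t ∈ Set.Icc (0:ℝ) T, 0 < Λ t) :
    let innerMax : (ℝ → ℝ) → ℝ := fun ρ =>
      sSup {x : ℝ | ∃ h : ℝ → ℝ, ContinuousOn h (Set.Icc (0:ℝ) T) ∧
        (∀ t ∈ Set.Icc (0:ℝ) T, 0 ≤ h t) ∧
        (∫ t in (0:ℝ)..T, ρ t * (h t) ^ 2) ≤ Cp ∧
        x = ∫ t in (0:ℝ)..T, Λ t * h t}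
    IsLeast
      {m : ℝ | ∃ ρ : ℝ → ℝ, Continuous ρ ∧ (∀ t ∈ Set.Icc (0:ℝ) T, 0 < ρ t) ∧
        (∫ t in (0:ℝ)..T, ρ t) = 1 ∧ m = innerMax ρ}
      (Real.sqrt Cp * ∫ t in (0:ℝ)..T, Λ t) ∧
    innerMax (fun t => Λ t / ∫ s in (0:ℝ)..T, Λ s) =
      Real.sqrt Cp * ∫ t in (0:ℝ)..T, Λ t := by
  intro innerMax
  have huIcc : Set.uIcc (0:ℝ) T = Set.Icc 0 T := Set.uIcc_of_le hT.le
  have intCO : ∀ f : ℝ → ℝ, ContinuousOn f (Set.Icc 0 T) →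
      IntervalIntegrable f volume 0 T := by
    intro f hf
    exact ContinuousOn.intervalIntegrable (huIcc ▸ hf)
  have hΛint : IntervalIntegrable Λ volume 0 T := intCO Λ hΛ_cont.continuousOn
  set I := ∫ t in (0:ℝ)..T, Λ t with hI_def
  have hI_pos : 0 < I := by
    apply intervalIntegral.intervalIntegral_pos_of_pos_on hΛint _ hT
    exact fun x hx => hΛ_pos x ⟨hx.1.le, hx.2.le⟩
  have hs : (0:ℝ) < Real.sqrt Cp := Real.sqrt_pos.2 hCp
  have hs2 : Real.sqrt Cp ^ 2 = Cp := Real.sq_sqrt hCp.le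
  -- lower bound for every admissible ρ
  have main : ∀ ρ : ℝ → ℝ, Continuous ρ → (∀ t ∈ Set.Icc (0:ℝ) T, 0 < ρ t) →
      (∫ t in (0:ℝ)..T, ρ t) = 1 → Real.sqrt Cp * I ≤ innerMax ρ := by
    intro ρ hρc hρpos hρ1
    have hρCO : ContinuousOn ρ (Set.Icc 0 T) := hρc.continuousOn
    have hρne : ∀ t ∈ Set.Icc (0:ℝ) T, ρ t ≠ 0 := fun t ht => (hρpos t ht).ne'
    have hinvCO : ContinuousOn (fun t => (Λ t)^2 / ρ t) (Set.Icc 0 T) :=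
      ((hΛ_cont.continuousOn).pow 2).div hρCO hρne
    set J := ∫ t in (0:ℝ)..T, (Λ t)^2 / ρ t with hJ_def
    have hJint : IntervalIntegrable (fun t => (Λ t)^2 / ρ t) volume 0 T := intCO _ hinvCO
    have hρint : IntervalIntegrable ρ volume 0 T := intCO ρ hρCO
    have hJI : I^2 ≤ J := by
      have hpt : ∀ t ∈ Set.Icc (0:ℝ) T, 2*I*Λ t - I^2 * ρ t ≤ (Λ t)^2 / ρ t := by
        intro t ht
        rw [le_div_iff₀ (hρpos t ht)]
        nlinarith [sq_nonneg (Λ t - I * ρ t)]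
      have hL : (∫ t in (0:ℝ)..T, (2*I*Λ t - I^2 * ρ t)) = I^2 := by
        rw [intervalIntegral.integral_sub (hΛint.const_mul _) (hρint.const_mul _),
          intervalIntegral.integral_const_mul, intervalIntegral.integral_const_mul,
          ← hI_def, hρ1]
        ring
      calc I^2 = ∫ t in (0:ℝ)..T, (2*I*Λ t - I^2 * ρ t) := hL.symm
        _ ≤ J := intervalIntegral.integral_mono_on hT.le
            ((hΛint.const_mul _).sub (hρint.const_mul _)) hJint hpt
    have hJpos : 0 < J := lt_of_lt_of_le (pow_pos hI_pos 2) hJI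
    set c := Real.sqrt (Cp / J) with hc_def
    have hc_pos : 0 < c := Real.sqrt_pos.2 (div_pos hCp hJpos)
    have hc2 : c^2 = Cp / J := Real.sq_sqrt (div_pos hCp hJpos).le
    -- bounded above
    have hbdd : BddAbove {x : ℝ | ∃ h : ℝ → ℝ, ContinuousOn h (Set.Icc (0:ℝ) T) ∧
        (∀ t ∈ Set.Icc (0:ℝ) T, 0 ≤ h t) ∧
        (∫ t in (0:ℝ)..T, ρ t * (h t) ^ 2) ≤ Cp ∧
        x = ∫ t in (0:ℝ)..T, Λ t * h t} := by
      refine ⟨(J + Cp)/2, ?_⟩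
      rintro x ⟨h, hCO, hnn, hfe, rfl⟩
      have hpt : ∀ t ∈ Set.Icc (0:ℝ) T,
          Λ t * h t ≤ ((Λ t)^2/ρ t + ρ t * (h t)^2)/2 := by
        intro t ht
        have hρt := hρpos t ht
        have hid : ((Λ t)^2/ρ t + ρ t * (h t)^2)/2 - Λ t * h t
            = (Λ t - ρ t * h t)^2/(2*ρ t) := by
          field_simp
          ring
        have hnn' : (0:ℝ) ≤ (Λ t - ρ t * h t)^2/(2*ρ t) :=
          div_nonneg (sq_nonneg _) (by positivity)
        linarith [hid ▸ hnn']
      have intρh2 : IntervalIntegrable (fun t => ρ t * (h t)^2) volume 0 T :=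
        intCO _ (hρCO.mul (hCO.pow 2))
      have intΛh : IntervalIntegrable (fun t => Λ t * h t) volume 0 T :=
        intCO _ ((hΛ_cont.continuousOn).mul hCO)
      have intRHS : IntervalIntegrable (fun t => ((Λ t)^2/ρ t + ρ t * (h t)^2)/2) volume 0 T :=
        (hJint.add intρh2).div_const 2
      have h1 : (∫ t in (0:ℝ)..T, Λ t * h t)
          ≤ ∫ t in (0:ℝ)..T, ((Λ t)^2/ρ t + ρ t * (h t)^2)/2 :=
        intervalIntegral.integral_mono_on hT.le intΛh intRHS hpt
      have h2 : (∫ t in (0:ℝ)..T, ((Λ t)^2/ρ t + ρ t * (h t)^2)/2)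
          = (J + ∫ t in (0:ℝ)..T, ρ t * (h t)^2)/2 := by
        rw [intervalIntegral.integral_div, intervalIntegral.integral_add hJint intρh2,
          ← hJ_def]
      linarith [h1, h2 ▸ h1]
    -- witness h = c * Λ / ρ
    have hmem : c * J ∈ {x : ℝ | ∃ h : ℝ → ℝ, ContinuousOn h (Set.Icc (0:ℝ) T) ∧
        (∀ t ∈ Set.Icc (0:ℝ) T, 0 ≤ h t) ∧
        (∫ t in (0:ℝ)..T, ρ t * (h t) ^ 2) ≤ Cp ∧
        x = ∫ t in (0:ℝ)..T, Λ t * h t} := by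
      refine ⟨fun t => c * (Λ t / ρ t), continuousOn_const.mul
        ((hΛ_cont.continuousOn).div hρCO hρne), ?_, ?_, ?_⟩
      · intro t ht
        exact mul_nonneg hc_pos.le (div_nonneg (hΛ_pos t ht).le (hρpos t ht).le)
      · have e1 : (∫ t in (0:ℝ)..T, ρ t * (c * (Λ t / ρ t))^2)
            = ∫ t in (0:ℝ)..T, c^2 * ((Λ t)^2 / ρ t) := by
          apply intervalIntegral.integral_congr
          rw [huIcc]
          intro t ht
          have := hρne t ht
          field_simp
        rw [e1, intervalIntegral.integral_const_mul, ← hJ_def, hc2,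
          div_mul_cancel₀ _ hJpos.ne']
      · have e2 : (∫ t in (0:ℝ)..T, Λ t * (c * (Λ t / ρ t)))
            = ∫ t in (0:ℝ)..T, c * ((Λ t)^2 / ρ t) := by
          apply intervalIntegral.integral_congr
          rw [huIcc]
          intro t ht
          have := hρne t ht
          field_simp
        rw [e2, intervalIntegral.integral_const_mul, ← hJ_def]
    have hx0 : Real.sqrt Cp * I ≤ c * J := by
      have hcJ : c * J = Real.sqrt Cp * Real.sqrt J := by
        rw [hc_def, Real.sqrt_div hCp.le, div_mul_eq_mul_div, mul_div_assoc,
          Real.div_sqrt]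
      have hIJ : I ≤ Real.sqrt J := by
        have := Real.sqrt_le_sqrt hJI
        rwa [Real.sqrt_sq hI_pos.le] at this
      rw [hcJ]
      exact mul_le_mul_of_nonneg_left hIJ hs.le
    exact le_trans hx0 (le_csSup hbdd hmem)
  -- computation of innerMax at ρ* = Λ / I
  have hstar : innerMax (fun t => Λ t / I) = Real.sqrt Cp * I := by
    apply IsGreatest.csSup_eq
    constructor
    · refine ⟨fun _ => Real.sqrt Cp, continuousOn_const, fun t _ => hs.le, ?_, ?_⟩
      · have e : ∀ t, (Λ t / I) * (Real.sqrt Cp)^2 = (Cp/I) * Λ t := by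
          intro t; rw [hs2]; ring
        simp only [e]
        rw [intervalIntegral.integral_const_mul, ← hI_def,
          div_mul_cancel₀ _ hI_pos.ne']
      · rw [intervalIntegral.integral_mul_const, ← hI_def, mul_comm]
    · rintro x ⟨h, hCO, hnn, hfe, rfl⟩
      have e : (∫ t in (0:ℝ)..T, (Λ t / I) * (h t)^2)
          = (∫ t in (0:ℝ)..T, Λ t * (h t)^2) / I := by
        simp_rw [div_mul_eq_mul_div]
        rw [intervalIntegral.integral_div]
      have hΛh2 : (∫ t in (0:ℝ)..T, Λ t * (h t)^2) ≤ Cp * I := by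
        rw [e, div_le_iff₀ hI_pos] at hfe
        exact hfe
      have intΛh2 : IntervalIntegrable (fun t => Λ t * (h t)^2) volume 0 T :=
        intCO _ ((hΛ_cont.continuousOn).mul (hCO.pow 2))
      have intΛh : IntervalIntegrable (fun t => Λ t * h t) volume 0 T :=
        intCO _ ((hΛ_cont.continuousOn).mul hCO)
      have hpt : ∀ t ∈ Set.Icc (0:ℝ) T,
          Λ t * h t ≤ (Real.sqrt Cp * Λ t + Λ t * (h t)^2 / Real.sqrt Cp)/2 := by
        intro t ht
        have hΛt := (hΛ_pos t ht).le
        have hid : (Real.sqrt Cp * Λ t + Λ t * (h t)^2 / Real.sqrt Cp)/2 - Λ t * h t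
            = Λ t * (h t - Real.sqrt Cp)^2 / (2 * Real.sqrt Cp) := by
          field_simp
          ring
        have hnn' : (0:ℝ) ≤ Λ t * (h t - Real.sqrt Cp)^2 / (2 * Real.sqrt Cp) :=
          div_nonneg (mul_nonneg hΛt (sq_nonneg _)) (by positivity)
        linarith [hid ▸ hnn']
      have intRHS : IntervalIntegrable
          (fun t => (Real.sqrt Cp * Λ t + Λ t * (h t)^2 / Real.sqrt Cp)/2) volume 0 T :=
        ((hΛint.const_mul _).add (intΛh2.div_const _)).div_const 2
      have h1 : (∫ t in (0:ℝ)..T, Λ t * h t)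
          ≤ ∫ t in (0:ℝ)..T, (Real.sqrt Cp * Λ t + Λ t * (h t)^2 / Real.sqrt Cp)/2 :=
        intervalIntegral.integral_mono_on hT.le intΛh intRHS hpt
      have h2 : (∫ t in (0:ℝ)..T, (Real.sqrt Cp * Λ t + Λ t * (h t)^2 / Real.sqrt Cp)/2)
          = (Real.sqrt Cp * I + (∫ t in (0:ℝ)..T, Λ t * (h t)^2) / Real.sqrt Cp)/2 := by
        rw [intervalIntegral.integral_div,
          intervalIntegral.integral_add (hΛint.const_mul _) (intΛh2.div_const _),
          intervalIntegral.integral_const_mul, intervalIntegral.integral_div, ← hI_def]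
      have h3 : (∫ t in (0:ℝ)..T, Λ t * (h t)^2) / Real.sqrt Cp ≤ Real.sqrt Cp * I := by
        rw [div_le_iff₀ hs]
        nlinarith [hΛh2, hs2, hI_pos]
      calc (∫ t in (0:ℝ)..T, Λ t * h t)
          ≤ (Real.sqrt Cp * I + (∫ t in (0:ℝ)..T, Λ t * (h t)^2) / Real.sqrt Cp)/2 := by
            rw [← h2]; exact h1
        _ ≤ Real.sqrt Cp * I := by linarith
  refine ⟨⟨⟨fun t => Λ t / I, hΛ_cont.div_const I, fun t ht => div_pos (hΛ_pos t ht) hI_pos,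
      ?_, hstar.symm⟩, ?_⟩, hstar⟩
  · rw [intervalIntegral.integral_div, ← hI_def, div_self hI_pos.ne']
  · rintro m ⟨ρ, hc, hp, h1, rfl⟩
    exact main ρ hc hp h1
end

section
/- Let Λ : [0,T] → ℝ be continuous, strictly positive. For densities ρ of the form ρ_c(t) = c·e^{−at} (normalized so ∫₀ᵀ ρ_c = 1), the quantity ∫₀ᵀ Λ(t)²/ρ_c(t) dt, viewed as a function of a ∈ ℝ, satisfies: if Λ(t) = e^{−λ₀ t} with λ₀ ∈ ℝ, the unique minimizer is a = λ₀. -/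
open MeasureTheory intervalIntegral

private lemma expc_cont (c : ℝ) : Continuous fun t : ℝ => Real.exp (-c * t) :=
  Real.continuous_exp.comp (continuous_const.mul continuous_id)

private lemma expG_pos (T : ℝ) (hT : 0 < T) (c : ℝ) :
    0 < ∫ t in (0:ℝ)..T, Real.exp (-c * t) := by
  apply intervalIntegral_pos_of_pos_on
  · exact (expc_cont c).intervalIntegrable 0 T
  · intro x _; exact Real.exp_pos _
  · exact hT

private lemma key_ineq (T : ℝ) (hT : 0 < T) (p q : ℝ) (hpq : p ≠ q) :
    (∫ t in (0:ℝ)..T, Real.exp (-((p+q)/2) * t)) ^ 2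
      < (∫ t in (0:ℝ)..T, Real.exp (-p * t)) * (∫ t in (0:ℝ)..T, Real.exp (-q * t)) := by
  set m : ℝ := (p+q)/2 with hm
  set f : ℝ → ℝ → ℝ := fun s t =>
    (Real.exp (-(p*t+q*s)/2) - Real.exp (-(q*t+p*s)/2))^2 with hfdef
  have hic : ∀ c k : ℝ, IntervalIntegrable (fun s => Real.exp (-c*s) * k) volume 0 T :=
    fun c k => ((expc_cont c).mul continuous_const).intervalIntegrable 0 T
  have sqexp : ∀ x y : ℝ, (Real.exp x - Real.exp y)^2
      = Real.exp (x+x) + Real.exp (y+y) - 2 * Real.exp (x+y) := by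
    intro x y
    rw [Real.exp_add, Real.exp_add, Real.exp_add]
    ring
  have expand : ∀ s t : ℝ, f s t =
      Real.exp (-p*t) * Real.exp (-q*s) + Real.exp (-q*t) * Real.exp (-p*s)
        - 2 * (Real.exp (-m*t) * Real.exp (-m*s)) := by
    intro s t
    simp only [hfdef]
    rw [sqexp,
      show -(p*t+q*s)/2 + -(p*t+q*s)/2 = (-p*t) + (-q*s) by ring,
      show -(q*t+p*s)/2 + -(q*t+p*s)/2 = (-q*t) + (-p*s) by ring,
      show -(p*t+q*s)/2 + -(q*t+p*s)/2 = (-m*t) + (-m*s) by rw [hm]; ring,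
      Real.exp_add, Real.exp_add, Real.exp_add]
  have hI : ∀ s : ℝ, (∫ t in (0:ℝ)..T, f s t)
      = Real.exp (-q*s) * (∫ t in (0:ℝ)..T, Real.exp (-p*t))
        + Real.exp (-p*s) * (∫ t in (0:ℝ)..T, Real.exp (-q*t))
        - 2 * (Real.exp (-m*s) * (∫ t in (0:ℝ)..T, Real.exp (-m*t))) := by
    intro s
    simp only [expand]
    rw [intervalIntegral.integral_sub ((hic p _).add (hic q _)) ((hic m _).const_mul 2),
      intervalIntegral.integral_add (hic p _) (hic q _),
      intervalIntegral.integral_const_mul, intervalIntegral.integral_mul_const,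
      intervalIntegral.integral_mul_const, intervalIntegral.integral_mul_const]
    ring
  have hIfun : (fun s => ∫ t in (0:ℝ)..T, f s t)
      = fun s => Real.exp (-q*s) * (∫ t in (0:ℝ)..T, Real.exp (-p*t))
        + Real.exp (-p*s) * (∫ t in (0:ℝ)..T, Real.exp (-q*t))
        - 2 * (Real.exp (-m*s) * (∫ t in (0:ℝ)..T, Real.exp (-m*t))) := funext hI
  have hDval : (∫ s in (0:ℝ)..T, ∫ t in (0:ℝ)..T, f s t)
      = 2 * ((∫ t in (0:ℝ)..T, Real.exp (-p*t)) * (∫ t in (0:ℝ)..T, Real.exp (-q*t))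
          - (∫ t in (0:ℝ)..T, Real.exp (-m*t)) ^ 2) := by
    rw [hIfun,
      intervalIntegral.integral_sub ((hic q _).add (hic p _)) ((hic m _).const_mul 2),
      intervalIntegral.integral_add (hic q _) (hic p _),
      intervalIntegral.integral_const_mul, intervalIntegral.integral_mul_const,
      intervalIntegral.integral_mul_const, intervalIntegral.integral_mul_const]
    ring
  have hfcont : ∀ s, Continuous (fun t => f s t) := by
    intro s
    simp only [hfdef]
    have h1 : Continuous fun t : ℝ => -(p*t+q*s)/2 :=
      (((continuous_const.mul continuous_id).add continuous_const).neg).div_const 2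
    have h2 : Continuous fun t : ℝ => -(q*t+p*s)/2 :=
      (((continuous_const.mul continuous_id).add continuous_const).neg).div_const 2
    exact ((Real.continuous_exp.comp h1).sub (Real.continuous_exp.comp h2)).pow 2
  have hfpos : ∀ s t : ℝ, s ≠ t → 0 < f s t := by
    intro s t hst
    apply sq_pos_of_ne_zero
    rw [sub_ne_zero]
    intro h
    have heq := Real.exp_injective h
    apply hst
    have h2 : (p - q) * (t - s) = 0 := by linarith
    rcases mul_eq_zero.mp h2 with h3 | h3
    · exact absurd (by linarith : p = q) hpq
    · linarith
  have hIpos : ∀ s ∈ Set.Ioo (0:ℝ) T, 0 < ∫ t in (0:ℝ)..T, f s t := by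
    intro s hs
    have hsplit : (∫ t in (0:ℝ)..s, f s t) + (∫ t in s..T, f s t)
        = ∫ t in (0:ℝ)..T, f s t :=
      intervalIntegral.integral_add_adjacent_intervals
        ((hfcont s).intervalIntegrable 0 s) ((hfcont s).intervalIntegrable s T)
    rw [← hsplit]
    have h1 : 0 < ∫ t in (0:ℝ)..s, f s t := by
      apply intervalIntegral_pos_of_pos_on ((hfcont s).intervalIntegrable 0 s)
      · intro t ht; exact hfpos s t (ne_of_gt ht.2)
      · exact hs.1
    have h2 : 0 < ∫ t in s..T, f s t := by
      apply intervalIntegral_pos_of_pos_on ((hfcont s).intervalIntegrable s T)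
      · intro t ht; exact hfpos s t (ne_of_lt ht.1)
      · exact hs.2
    linarith
  have hDpos : 0 < ∫ s in (0:ℝ)..T, ∫ t in (0:ℝ)..T, f s t := by
    apply intervalIntegral_pos_of_pos_on _ hIpos hT
    rw [hIfun]
    exact ((((expc_cont q).mul continuous_const).add
      ((expc_cont p).mul continuous_const)).sub
      (continuous_const.mul ((expc_cont m).mul continuous_const))).intervalIntegrable 0 T
  rw [hDval] at hDpos
  linarith

theorem exponential_family_optimal_rate
    (T : ℝ) (hT : 0 < T) (l₀ : ℝ)
    (Λ : ℝ → ℝ) (hΛ_cont : Continuous Λ)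
    (hΛ_pos : ∀ t ∈ Set.Icc (0:ℝ) T, 0 < Λ t)
    (hΛ : ∀ t ∈ Set.Icc (0:ℝ) T, Λ t = Real.exp (-l₀ * t)) :
    let ρexp : ℝ → ℝ → ℝ := fun a t =>
      Real.exp (-a * t) / ∫ s in (0:ℝ)..T, Real.exp (-a * s)
    let Φ : ℝ → ℝ := fun a => ∫ t in (0:ℝ)..T, (Λ t) ^ 2 / ρexp a t
    ∀ a : ℝ, a ≠ l₀ → Φ l₀ < Φ a := by
  intro ρexp Φ a ha
  have hΦ : ∀ b : ℝ, Φ b = (∫ t in (0:ℝ)..T, Real.exp (-b*t))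
      * ∫ t in (0:ℝ)..T, Real.exp (-(2*l₀-b)*t) := by
    intro b
    have hcongr : ∀ t ∈ Set.uIcc (0:ℝ) T,
        (Λ t) ^ 2 / ρexp b t
          = (∫ s in (0:ℝ)..T, Real.exp (-b*s)) * Real.exp (-(2*l₀-b)*t) := by
      intro t ht
      rw [Set.uIcc_of_le hT.le] at ht
      rw [hΛ t ht]
      simp only [ρexp]
      have hexp : (Real.exp (-l₀*t))^2 / Real.exp (-b*t) = Real.exp (-(2*l₀-b)*t) := by
        rw [sq, ← Real.exp_add, ← Real.exp_sub]
        congr 1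
        ring
      rw [div_div_eq_mul_div, mul_div_right_comm, hexp, mul_comm]
    have h1 : Φ b = ∫ t in (0:ℝ)..T,
        (∫ s in (0:ℝ)..T, Real.exp (-b*s)) * Real.exp (-(2*l₀-b)*t) :=
      intervalIntegral.integral_congr hcongr
    rw [h1, intervalIntegral.integral_const_mul]
  rw [hΦ a, hΦ l₀, show 2*l₀-l₀ = l₀ by ring]
  have hkey := key_ineq T hT a (2*l₀ - a) (by intro h; apply ha; linarith)
  rw [show (a + (2*l₀ - a))/2 = l₀ by ring] at hkey
  nlinarith [hkey]
end
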